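/- For each i ∈ {1,2,3} and every t ∈ (0, t₀]: ‖∂_{x_i}ψ(t,·)‖_{L²(𝕋³)} ≤ ‖∂_{x_i}ψ(t₀,·)‖_{L²(𝕋³)} + ((t₀^{1−2/γ} − t^{1−2/γ})/(1 − 2/γ)) · ( ∫_{[0,1]³} [ t₀^{4/γ} (∂_t∂_{x_i}ψ)²(t₀,x) + t₀^{8/(3γ)} Σ_{j=1}^{3} (∂_{x_j}∂_{x_i}ψ)²(t₀,x) ] dx )^{1/2}. (Note (t₀^{1−2/γ} − t^{1−2/γ})/(1 − 2/γ) > 0 since 1 − 2/γ < 0.) -/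

import Mathlib

noncomputable section

open MeasureTheory Filter Set

/-- Spatial partial derivative `∂_{x_i}` in the `i`-th coordinate direction. -/
def pd (i : Fin 3) (f : (Fin 3 → ℝ) → ℝ) (x : Fin 3 → ℝ) : ℝ :=
  deriv (fun s => f (Function.update x i s)) (x i)

/-- Iterated spatial derivative `∂_x^α` for a multi-index `α ∈ ℕ³`. -/
def pdMulti (α : Fin 3 → ℕ) (f : (Fin 3 → ℝ) → ℝ) : (Fin 3 → ℝ) → ℝ :=
  (pd 0)^[α 0] ((pd 1)^[α 1] ((pd 2)^[α 2] f))

/-- Time derivative `∂_t`. -/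
def dtd (ψ : ℝ → (Fin 3 → ℝ) → ℝ) : ℝ → (Fin 3 → ℝ) → ℝ :=
  fun t x => deriv (fun s => ψ s x) t

/-- `ℤ³`-periodicity of a function on `ℝ³`. -/
def ZPeriodic (f : (Fin 3 → ℝ) → ℝ) : Prop :=
  ∀ (x : Fin 3 → ℝ) (k : Fin 3 → ℤ), f (x + fun i => (k i : ℝ)) = f x

/-- Smoothness of `ψ` on `(0,∞) × ℝ³`. -/
def SmoothOnPos (ψ : ℝ → (Fin 3 → ℝ) → ℝ) : Prop :=
  ContDiffOn ℝ (⊤ : ℕ∞) (fun p : ℝ × (Fin 3 → ℝ) => ψ p.1 p.2)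
    {p : ℝ × (Fin 3 → ℝ) | 0 < p.1}

/-- The unit cube `[0,1]³`, a fundamental domain for `𝕋³`. -/
def cube : Set (Fin 3 → ℝ) := Set.Icc 0 1

/-- The FLRW wave equation `□_g ψ = 0` in coordinates. -/
def FLRWwave (γ : ℝ) (ψ : ℝ → (Fin 3 → ℝ) → ℝ) : Prop :=
  ∀ t : ℝ, 0 < t → ∀ x : Fin 3 → ℝ,
    dtd (dtd ψ) t x + (2 / γ) * t⁻¹ * dtd ψ t x
      - t ^ (-(4 / (3 * γ))) * ∑ i : Fin 3, pd i (pd i (ψ t)) x = 0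

/-!
`φ = ∂ᵢψ` solves the same wave equation. Its energy
`E(s) = ∫ s^{4/γ} (∂ₜφ)² + s^{8/(3γ)} |∇φ|²` satisfies
`E'(s) = 8/(3γ) s^{8/(3γ)-1} ∫ |∇φ|² ≥ 0`: the damping term cancels the derivative of the
weight `s^{4/γ}`, and the remaining terms form a spatial divergence, which integrates to zero
over the torus.
Hence `‖∂ₜφ(s)‖ ≤ s^{-2/γ} √E(t₀)` for `s ≤ t₀`, and integrating `‖φ‖' ≥ -‖∂ₜφ‖` from `t` to `t₀`
gives the estimate.
-/

open scoped ContDiff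

section DirDeriv

variable {E : Type*} [NormedAddCommGroup E] [NormedSpace ℝ E] {U : Set E} {F G : E → ℝ} {p : E}

def dirDeriv (v : E) (F : E → ℝ) (p : E) : ℝ := fderiv ℝ F p v

theorem ContDiffOn.dirDeriv (hU : IsOpen U) (hF : ContDiffOn ℝ ∞ F U) (v : E) :
    ContDiffOn ℝ ∞ (dirDeriv v F) U :=
  ((contDiffOn_infty_iff_fderiv_of_isOpen hU).1 hF).2.clm_apply contDiffOn_const

theorem dirDeriv_congr (hU : IsOpen U) (hFG : EqOn F G U) (hp : p ∈ U) (v : E) :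
    dirDeriv v F p = dirDeriv v G p := by
  rw [dirDeriv, dirDeriv, (eventuallyEq_of_mem (hU.mem_nhds hp) hFG).fderiv_eq]

theorem dirDeriv_comm (hU : IsOpen U) (hF : ContDiffOn ℝ ∞ F U) (hp : p ∈ U) (v w : E) :
    dirDeriv v (dirDeriv w F) p = dirDeriv w (dirDeriv v F) p := by
  have hF' := hF.contDiffAt (hU.mem_nhds hp)
  have hd2 : DifferentiableAt ℝ (fderiv ℝ F) p :=
    (hF'.fderiv_right (m := 1) (by norm_cast)).differentiableAt one_ne_zero
  have hsecond : ∀ v w, dirDeriv v (dirDeriv w F) p = fderiv ℝ (fderiv ℝ F) p v w := fun v w => by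
    change fderiv ℝ (fun q => fderiv ℝ F q w) p v = _
    rw [fderiv_clm_apply hd2 (differentiableAt_const w)]
    simp
  rw [hsecond, hsecond]
  exact hF'.isSymmSndFDerivAt (by simp only [minSmoothness_of_isRCLikeNormedField]; norm_cast) v w

end DirDeriv

local notation "ℝ³" => Fin 3 → ℝ
local notation "∂ₜ" => dirDeriv ((1 : ℝ), (0 : ℝ³))
local notation "∂[" j "]" => dirDeriv ((0 : ℝ), (Pi.single j 1 : ℝ³))

def posTime : Set (ℝ × ℝ³) := {p | 0 < p.1}

theorem isOpen_posTime : IsOpen posTime := isOpen_lt continuous_const continuous_fst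

section Slices

variable {F : ℝ × ℝ³ → ℝ} {t : ℝ} {x : ℝ³}

theorem ContDiffOn.slice {n : WithTop ℕ∞} (hF : ContDiffOn ℝ n F posTime) (ht : 0 < t) :
    ContDiff ℝ n (fun x => F (t, x)) :=
  contDiffOn_univ.1 <| hF.comp (contDiff_const.prodMk contDiff_id).contDiffOn fun _ _ => ht

theorem ContDiffOn.differentiableAt_of_pos {n : WithTop ℕ∞} (hF : ContDiffOn ℝ n F posTime)
    (hn : n ≠ 0) (ht : 0 < t) : DifferentiableAt ℝ F (t, x) :=
  (hF.contDiffAt (isOpen_posTime.mem_nhds ht)).differentiableAt hn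

theorem ContinuousOn.slice (hF : ContinuousOn F posTime) (ht : 0 < t) :
    Continuous fun x => F (t, x) :=
  hF.comp_continuous (continuous_const.prodMk continuous_id) fun _ => ht

theorem hasDerivAt_time_slice (hF : DifferentiableAt ℝ F (t, x)) :
    HasDerivAt (fun s => F (s, x)) (∂ₜ F (t, x)) t :=
  hF.hasFDerivAt.comp_hasDerivAt t ((hasDerivAt_id t).prodMk (hasDerivAt_const t x))

theorem hasDerivAt_space_slice (hF : DifferentiableAt ℝ F (t, x)) (i : Fin 3) :
    HasDerivAt (fun r => F (t, Function.update x i r)) (∂[i] F (t, x)) (x i) := by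
  have hF' : HasFDerivAt F (fderiv ℝ F (t, x)) (t, Function.update x i (x i)) := by
    rw [Function.update_eq_self]
    exact hF.hasFDerivAt
  exact hF'.comp_hasDerivAt (x i) ((hasDerivAt_const (x i) t).prodMk (hasDerivAt_update x i _))

theorem pd_slice_eq (hF : DifferentiableAt ℝ F (t, x)) (i : Fin 3) :
    pd i (fun y => F (t, y)) x = ∂[i] F (t, x) :=
  (hasDerivAt_space_slice hF i).deriv

theorem dtd_eq_of_eq_slice {g : ℝ → ℝ³ → ℝ} (hg : ∀ s, 0 < s → g s x = F (s, x))
    (hF : DifferentiableAt ℝ F (t, x)) (ht : 0 < t) : dtd g t x = ∂ₜ F (t, x) := by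
  have hev : (fun s => g s x) =ᶠ[nhds t] fun s => F (s, x) :=
    eventually_gt_nhds ht |>.mono hg
  rw [dtd, hev.deriv_eq, (hasDerivAt_time_slice hF).deriv]

end Slices

theorem pd_eq_fderiv {f : ℝ³ → ℝ} {x : ℝ³} (hf : DifferentiableAt ℝ f x) (i : Fin 3) :
    pd i f x = fderiv ℝ f x (Pi.single i 1) := by
  have hf' : HasFDerivAt f (fderiv ℝ f x) (Function.update x i (x i)) := by
    rw [Function.update_eq_self]
    exact hf.hasFDerivAt
  exact (hf'.comp_hasDerivAt (x i) (hasDerivAt_update x i _)).deriv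

theorem ContDiff.continuous_pd {f : ℝ³ → ℝ} (hf : ContDiff ℝ 1 f) (i : Fin 3) :
    Continuous (pd i f) := by
  have : pd i f = fun x => fderiv ℝ f x (Pi.single i 1) :=
    funext fun x => pd_eq_fderiv (hf.differentiable one_ne_zero x) i
  rw [this]
  exact (hf.continuous_fderiv one_ne_zero).clm_apply continuous_const

theorem Continuous.integrableOn_cube {f : ℝ³ → ℝ} (hf : Continuous f) : IntegrableOn f cube :=
  hf.integrableOn_Icc

section Periodic

variable {f g : ℝ³ → ℝ}

theorem ZPeriodic.mul (hf : ZPeriodic f) (hg : ZPeriodic g) : ZPeriodic (f * g) :=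
  fun x k => by simp only [Pi.mul_apply, hf x k, hg x k]

theorem ZPeriodic.pd (hf : ZPeriodic f) (i : Fin 3) : ZPeriodic (pd i f) := by
  intro x k
  have hshift : (fun r => f (Function.update (x + fun m => (k m : ℝ)) i r))
      = fun r => f (Function.update x i (r - k i)) := by
    funext r
    rw [← hf (Function.update x i (r - k i)) k]
    congr 1
    funext m
    rcases eq_or_ne m i with rfl | hm
    · simp
    · simp [hm]
  simp only [_root_.pd, hshift, Pi.add_apply]
  rw [deriv_comp_sub_const (f := fun s => f (Function.update x i s)), add_sub_cancel_right]

theorem integral_cube_pd_eq_zero (hf : ContDiff ℝ 1 f) (hper : ZPeriodic f) (j : Fin 3) :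
    ∫ x in cube, pd j f x = 0 := by
  classical
  have hdf : ∀ x, HasFDerivAt f (fderiv ℝ f x) x :=
    fun x => (hf.differentiable one_ne_zero x).hasFDerivAt
  have hdiv : ∀ x, ∑ i, (if i = j then fderiv ℝ f x else 0) (Pi.single i 1) = pd j f x := by
    intro x
    rw [Finset.sum_eq_single j (fun i _ hi => by simp [hi]) (by simp)]
    simp [pd_eq_fderiv (hdf x).differentiableAt]
  have hdivergence := integral_divergence_of_hasFDerivAt_off_countable' (a := 0) (b := 1)
    (fun _ => zero_le_one) (fun i => if i = j then f else 0)
    (fun i x => if i = j then fderiv ℝ f x else 0) ∅ countable_empty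
    (fun i => by split_ifs; exacts [hf.continuous.continuousOn, continuousOn_const])
    (fun x _ i => by split_ifs; exacts [hdf x, hasFDerivAt_const 0 x])
    (by simpa only [hdiv] using (hf.continuous_pd j).integrableOn_Icc)
  simp only [hdiv] at hdivergence
  rw [cube, hdivergence]
  refine Finset.sum_eq_zero fun i _ => ?_
  split_ifs with hij
  · subst hij
    -- opposite faces of the cube differ by the lattice vector `e_i`
    refine sub_eq_zero.2 (setIntegral_congr_fun measurableSet_Icc fun y _ => ?_)
    have hshift : Fin.insertNth i ((1 : ℝ³) i) y
        = Fin.insertNth i ((0 : ℝ³) i) y + fun m => ((Pi.single i 1 : Fin 3 → ℤ) m : ℝ) := by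
      funext m
      rcases eq_or_ne m i with rfl | hm
      · simp
      · obtain ⟨l, rfl⟩ := Fin.exists_succAbove_eq hm
        simp
    simp only [hshift, hper _ _]
  · simp

theorem integral_mul_le_sqrt_mul_sqrt {α : Type*} [MeasurableSpace α] {μ : Measure α}
    {f g : α → ℝ} (hf : MemLp f 2 μ) (hg : MemLp g 2 μ) :
    ∫ a, f a * g a ∂μ ≤ √(∫ a, f a ^ 2 ∂μ) * √(∫ a, g a ^ 2 ∂μ) := by
  have hHolder := integral_mul_le_Lp_mul_Lq_of_nonneg Real.HolderConjugate.two_two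
    (.of_forall fun a => abs_nonneg (f a)) (.of_forall fun a => abs_nonneg (g a))
    (by rw [ENNReal.ofReal_ofNat]; exact hf.abs) (by rw [ENNReal.ofReal_ofNat]; exact hg.abs)
  calc ∫ a, f a * g a ∂μ ≤ ∫ a, |f a| * |g a| ∂μ :=
        integral_mono (hf.integrable_mul hg) (hf.abs.integrable_mul hg.abs)
          fun a => (le_abs_self _).trans (abs_mul _ _).le
    _ ≤ _ := by simpa [Real.sqrt_eq_rpow] using hHolder

theorem Continuous.memLp_two_cube {f : ℝ³ → ℝ} (hf : Continuous f) :
    MemLp f 2 (volume.restrict cube) :=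
  (memLp_two_iff_integrable_sq hf.aestronglyMeasurable).2 (hf.pow 2).integrableOn_cube

theorem hasDerivAt_integral_cube {H : ℝ × ℝ³ → ℝ} (hH : ContDiffOn ℝ 1 H posTime) {t : ℝ}
    (ht : 0 < t) :
    HasDerivAt (fun s => ∫ x in cube, H (s, x)) (∫ x in cube, ∂ₜ H (t, x)) t := by
  have hHd : ContinuousOn (∂ₜ H) posTime :=
    (hH.continuousOn_fderiv_of_isOpen isOpen_posTime le_rfl).clm_apply continuousOn_const
  have hball : Metric.ball t (t / 2) ⊆ Icc (t / 2) (3 * t / 2) := fun s hs => by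
    rw [Metric.mem_ball, Real.dist_eq, abs_lt] at hs
    constructor <;> linarith
  have hsub : Icc (t / 2) (3 * t / 2) ×ˢ cube ⊆ posTime :=
    fun p hp => (half_pos ht).trans_le (mem_prod.1 hp).1.1
  obtain ⟨C, hC⟩ := (isCompact_Icc.prod isCompact_Icc).exists_bound_of_continuousOn
    (hHd.mono hsub)
  refine (hasDerivAt_integral_of_dominated_loc_of_deriv_le (bound := fun _ => C)
    (Metric.ball_mem_nhds t (half_pos ht))
    ((eventually_gt_nhds ht).mono fun s hs => (hH.continuousOn.slice hs).aestronglyMeasurable)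
    (hH.continuousOn.slice ht).integrableOn_cube (hHd.slice ht).aestronglyMeasurable
    ((ae_restrict_mem measurableSet_Icc).mono fun x hx s hs => hC (s, x) ⟨hball hs, hx⟩)
    (integrableOn_const isCompact_Icc.measure_lt_top.ne) (.of_forall fun x s hs => ?_)).2
  exact hasDerivAt_time_slice
    (hH.differentiableAt_of_pos one_ne_zero ((half_pos ht).trans_le (hball hs).1))

theorem sqrt_le_sqrt_add_sub_of_hasDerivAt {K K' B b : ℝ → ℝ} {t t₀ : ℝ} (htt₀ : t ≤ t₀)
    (hK : ∀ s ∈ Icc t t₀, HasDerivAt K (K' s) s) (hB : ∀ s ∈ Icc t t₀, HasDerivAt B (b s) s)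
    (hK₀ : ∀ s ∈ Icc t t₀, 0 ≤ K s) (hb₀ : ∀ s ∈ Icc t t₀, 0 ≤ b s)
    (hKb : ∀ s ∈ Icc t t₀, -K' s ≤ 2 * √(K s) * b s) :
    √(K t) ≤ √(K t₀) + (B t₀ - B t) := by
  refine le_of_forall_pos_le_add fun ε hε => ?_
  -- `√(K + ε²)` is differentiable even where `K` vanishes
  have hW : ∀ s ∈ Icc t t₀, HasDerivAt (fun s => √(K s + ε ^ 2) + B s)
      (K' s / (2 * √(K s + ε ^ 2)) + b s) s := fun s hs =>
    (((hK s hs).add_const _).sqrt (by nlinarith [hK₀ s hs])).add (hB s hs)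
  have hmono : MonotoneOn (fun s => √(K s + ε ^ 2) + B s) (Icc t t₀) := by
    refine monotoneOn_of_deriv_nonneg (convex_Icc t t₀)
      (fun s hs => (hW s hs).continuousAt.continuousWithinAt)
      (fun s hs => (hW s (interior_subset hs)).differentiableAt.differentiableWithinAt)
      fun s hs => ?_
    have hs' := interior_subset hs
    have hpos : 0 < √(K s + ε ^ 2) := Real.sqrt_pos.2 (by nlinarith [hK₀ s hs'])
    have hle : √(K s) ≤ √(K s + ε ^ 2) := Real.sqrt_le_sqrt (by nlinarith)
    rw [(hW s hs').deriv, ← neg_le_iff_add_nonneg, le_div_iff₀ (by positivity)]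
    nlinarith [hKb s hs', hb₀ s hs']
  have hend := hmono ⟨le_rfl, htt₀⟩ ⟨htt₀, le_rfl⟩ htt₀
  have hlow : √(K t) ≤ √(K t + ε ^ 2) := Real.sqrt_le_sqrt (by nlinarith)
  have hhigh : √(K t₀ + ε ^ 2) ≤ √(K t₀) + ε := by
    rw [Real.sqrt_le_left (by positivity)]
    nlinarith [Real.sq_sqrt (hK₀ t₀ ⟨htt₀, le_rfl⟩), Real.sqrt_nonneg (K t₀)]
  simp only at hend
  linarith

def waveOp (γ : ℝ) (F : ℝ × ℝ³ → ℝ) (p : ℝ × ℝ³) : ℝ :=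
  ∂ₜ (∂ₜ F) p + 2 / γ * p.1⁻¹ * ∂ₜ F p - p.1 ^ (-(4 / (3 * γ))) * ∑ j, ∂[j] (∂[j] F) p

theorem waveOp_eq_zero_of_flrwWave {γ : ℝ} {ψ : ℝ → ℝ³ → ℝ} (hψ : SmoothOnPos ψ)
    (hwave : FLRWwave γ ψ) : ∀ p ∈ posTime, waveOp γ (fun p => ψ p.1 p.2) p = 0 := by
  rintro ⟨s, x⟩ (hs : 0 < s)
  set Φ : ℝ × ℝ³ → ℝ := fun p => ψ p.1 p.2
  have hΦ : ContDiffOn ℝ ∞ Φ posTime := hψ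
  have hΦ₁ : ∀ v, ContDiffOn ℝ ∞ (dirDeriv v Φ) posTime := hΦ.dirDeriv isOpen_posTime
  have htt : dtd (dtd ψ) s x = ∂ₜ (∂ₜ Φ) (s, x) :=
    dtd_eq_of_eq_slice
      (fun u hu => dtd_eq_of_eq_slice (fun _ _ => rfl) (hΦ.differentiableAt_of_pos (by simp) hu) hu)
      ((hΦ₁ _).differentiableAt_of_pos (by simp) hs) hs
  have ht : dtd ψ s x = ∂ₜ Φ (s, x) :=
    (hasDerivAt_time_slice (hΦ.differentiableAt_of_pos (by simp) hs)).deriv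
  have hxx : ∀ j, pd j (pd j (ψ s)) x = ∂[j] (∂[j] Φ) (s, x) := fun j => by
    have hx : pd j (ψ s) = fun y => ∂[j] Φ (s, y) :=
      funext fun y => pd_slice_eq (hΦ.differentiableAt_of_pos (by simp) hs) j
    rw [hx]
    exact pd_slice_eq ((hΦ₁ _).differentiableAt_of_pos (by simp) hs) j
  have := hwave s hs x
  rwa [htt, ht, Finset.sum_congr rfl fun j _ => hxx j] at this

theorem waveOp_spaceDeriv_eq_zero {γ : ℝ} {F : ℝ × ℝ³ → ℝ} (hF : ContDiffOn ℝ ∞ F posTime)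
    (hwave : ∀ p ∈ posTime, waveOp γ F p = 0) (i : Fin 3) :
    ∀ p ∈ posTime, waveOp γ (∂[i] F) p = 0 := by
  rintro ⟨s, x⟩ hs
  have hF1 : ∀ v, ContDiffOn ℝ ∞ (dirDeriv v F) posTime := hF.dirDeriv isOpen_posTime
  have hF2 : ∀ v w, ContDiffOn ℝ ∞ (dirDeriv v (dirDeriv w F)) posTime :=
    fun v w => (hF1 w).dirDeriv isOpen_posTime v
  have hslice : ∀ {G : ℝ × ℝ³ → ℝ}, ContDiffOn ℝ ∞ G posTime →
      HasDerivAt (fun r => G (s, Function.update x i r)) (∂[i] G (s, x)) (x i) :=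
    fun hG => hasDerivAt_space_slice (hG.differentiableAt_of_pos (by simp) hs) i
  have hderiv : HasDerivAt (fun r => waveOp γ F (s, Function.update x i r))
      (∂[i] (∂ₜ (∂ₜ F)) (s, x) + 2 / γ * s⁻¹ * ∂[i] (∂ₜ F) (s, x)
        - s ^ (-(4 / (3 * γ))) * ∑ j, ∂[i] (∂[j] (∂[j] F)) (s, x)) (x i) := by
    simp only [waveOp]
    exact ((hslice (hF2 _ _)).fun_add ((hslice (hF1 _)).const_mul _)).fun_sub
        ((HasDerivAt.fun_sum fun j _ => hslice (hF2 _ _)).const_mul _)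
  have hzero : HasDerivAt (fun r => waveOp γ F (s, Function.update x i r)) 0 (x i) :=
    (hasDerivAt_const _ _).congr_of_eventuallyEq (.of_forall fun r => hwave _ hs)
  have hcomm1 : ∀ v, ∂[i] (dirDeriv v F) (s, x) = dirDeriv v (∂[i] F) (s, x) :=
    fun v => dirDeriv_comm isOpen_posTime hF hs _ _
  have hcomm2 : ∀ v w, ∂[i] (dirDeriv v (dirDeriv w F)) (s, x)
      = dirDeriv v (dirDeriv w (∂[i] F)) (s, x) := fun v w => by
    rw [dirDeriv_comm isOpen_posTime (hF1 w) hs,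
      dirDeriv_congr isOpen_posTime (fun q hq => dirDeriv_comm isOpen_posTime hF hq _ _) hs]
  simp only [hcomm1, hcomm2] at hderiv
  exact hderiv.unique hzero

section Energy

variable {γ : ℝ} {φ : ℝ × ℝ³ → ℝ} {s : ℝ}

theorem zPeriodic_timeDeriv_slice {n : WithTop ℕ∞} (hφ : ContDiffOn ℝ n φ posTime) (hn : n ≠ 0)
    (hper : ∀ s, 0 < s → ZPeriodic fun x => φ (s, x)) (hs : 0 < s) :
    ZPeriodic fun x => ∂ₜ φ (s, x) := fun x k => by
  show ∂ₜ φ (s, x + fun i => (k i : ℝ)) = ∂ₜ φ (s, x)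
  rw [← (hasDerivAt_time_slice (hφ.differentiableAt_of_pos hn hs)).deriv,
    ← (hasDerivAt_time_slice (hφ.differentiableAt_of_pos hn hs)).deriv]
  exact EventuallyEq.deriv_eq ((eventually_gt_nhds hs).mono fun u hu => hper u hu x k)

theorem zPeriodic_spaceDeriv_slice {n : WithTop ℕ∞} (hφ : ContDiffOn ℝ n φ posTime) (hn : n ≠ 0)
    (hper : ∀ s, 0 < s → ZPeriodic fun x => φ (s, x)) (hs : 0 < s) (j : Fin 3) :
    ZPeriodic fun x => ∂[j] φ (s, x) := by
  simpa only [← pd_slice_eq (hφ.differentiableAt_of_pos hn hs)] using (hper s hs).pd j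

variable (γ φ) in
def energyDensity (p : ℝ × ℝ³) : ℝ :=
  p.1 ^ (4 / γ) * ∂ₜ φ p ^ 2 + p.1 ^ (8 / (3 * γ)) * ∑ j, ∂[j] φ p ^ 2

variable (γ φ) in
def energy (s : ℝ) : ℝ := ∫ x in cube, energyDensity γ φ (s, x)

theorem ContDiffOn.energyDensity (hφ : ContDiffOn ℝ ∞ φ posTime) :
    ContDiffOn ℝ ∞ (energyDensity γ φ) posTime := by
  have hpow : ∀ r : ℝ, ContDiffOn ℝ ∞ (fun p : ℝ × ℝ³ => p.1 ^ r) posTime :=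
    fun r => contDiffOn_fst.rpow_const_of_ne fun p hp => (hp : 0 < p.1).ne'
  exact ((hpow _).mul ((hφ.dirDeriv isOpen_posTime _).pow 2)).add
    ((hpow _).mul (ContDiffOn.sum fun j _ => (hφ.dirDeriv isOpen_posTime _).pow 2))

theorem hasDerivAt_energyDensity (hφ : ContDiffOn ℝ ∞ φ posTime)
    (hwave : ∀ p ∈ posTime, waveOp γ φ p = 0) (hs : 0 < s) (x : ℝ³) :
    HasDerivAt (fun u => energyDensity γ φ (u, x))
      (8 / (3 * γ) * s ^ (8 / (3 * γ) - 1) * ∑ j, ∂[j] φ (s, x) ^ 2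
        + 2 * s ^ (8 / (3 * γ)) * ∑ j, pd j (fun y => ∂ₜ φ (s, y) * ∂[j] φ (s, y)) x) s := by
  have hD : ∀ v, DifferentiableAt ℝ (dirDeriv v φ) (s, x) :=
    fun v => (hφ.dirDeriv isOpen_posTime v).differentiableAt_of_pos (by simp) hs
  have hpow : ∀ r : ℝ, HasDerivAt (fun u : ℝ => u ^ r) (r * s ^ (r - 1)) s :=
    fun r => Real.hasDerivAt_rpow_const (Or.inl hs.ne')
  have hraw := ((hpow (4 / γ)).fun_mul ((hasDerivAt_time_slice (hD (1, 0))).fun_pow 2)).fun_add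
    ((hpow (8 / (3 * γ))).fun_mul (HasDerivAt.fun_sum (u := Finset.univ) fun j _ =>
      (hasDerivAt_time_slice (hD (0, Pi.single j 1))).fun_pow 2))
  have hwave' : ∂ₜ (∂ₜ φ) (s, x) = s ^ (-(4 / (3 * γ))) * ∑ j, ∂[j] (∂[j] φ) (s, x)
      - 2 / γ * s⁻¹ * ∂ₜ φ (s, x) := by
    have h := hwave (s, x) hs
    unfold waveOp at h
    linear_combination h
  have hcomm : ∀ j, ∂ₜ (∂[j] φ) (s, x) = ∂[j] (∂ₜ φ) (s, x) :=
    fun j => dirDeriv_comm isOpen_posTime hφ hs _ _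
  have hdiv : ∀ j, pd j (fun y => ∂ₜ φ (s, y) * ∂[j] φ (s, y)) x
      = ∂[j] (∂ₜ φ) (s, x) * ∂[j] φ (s, x) + ∂ₜ φ (s, x) * ∂[j] (∂[j] φ) (s, x) :=
    fun j => by
      simpa only [Function.update_eq_self, pd] using ((hasDerivAt_space_slice (hD (1, 0)) j).fun_mul
        (hasDerivAt_space_slice (hD (0, Pi.single j 1)) j)).deriv
  have hpow₁ : s ^ (4 / γ - 1) = s ^ (4 / γ) * s⁻¹ := by
    rw [Real.rpow_sub_one hs.ne', div_eq_mul_inv]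
  have hpow₂ : s ^ (4 / γ) * s ^ (-(4 / (3 * γ))) = s ^ (8 / (3 * γ)) := by
    rw [← Real.rpow_add hs]
    ring_nf
  refine hraw.congr_deriv ?_
  simp only [hwave', hcomm, hdiv]
  linear_combination (norm := skip) (4 / γ * ∂ₜ φ (s, x) ^ 2) * hpow₁
    + (2 * ∂ₜ φ (s, x) * ∑ j, ∂[j] (∂[j] φ) (s, x)) * hpow₂
  simp only [Fin.sum_univ_three]
  ring

theorem hasDerivAt_integral_sq (hφ : ContDiffOn ℝ ∞ φ posTime) (hs : 0 < s) :
    HasDerivAt (fun s => ∫ x in cube, φ (s, x) ^ 2)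
      (∫ x in cube, 2 * φ (s, x) * ∂ₜ φ (s, x)) s := by
  have hsq : ContDiffOn ℝ ∞ (fun p => φ p ^ 2) posTime := hφ.pow 2
  refine (hasDerivAt_integral_cube (contDiffOn_infty.1 hsq 1) hs).congr_deriv
    (setIntegral_congr_fun measurableSet_Icc fun x _ => ?_)
  refine (hasDerivAt_time_slice (hsq.differentiableAt_of_pos (by simp) hs)).unique ?_
  simpa using (hasDerivAt_time_slice (hφ.differentiableAt_of_pos (by simp) hs)).fun_pow 2

theorem hasDerivAt_energy (hφ : ContDiffOn ℝ ∞ φ posTime)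
    (hwave : ∀ p ∈ posTime, waveOp γ φ p = 0) (hper : ∀ s, 0 < s → ZPeriodic fun x => φ (s, x))
    (hs : 0 < s) :
    HasDerivAt (energy γ φ)
      (8 / (3 * γ) * s ^ (8 / (3 * γ) - 1) * ∫ x in cube, ∑ j, ∂[j] φ (s, x) ^ 2) s := by
  have hφ₁ : ∀ v, ContDiffOn ℝ ∞ (dirDeriv v φ) posTime := hφ.dirDeriv isOpen_posTime
  have hflux : ∀ j, ContDiff ℝ 1 fun y => ∂ₜ φ (s, y) * ∂[j] φ (s, y) := fun j =>
    contDiff_infty.1 (((hφ₁ _).slice hs).mul ((hφ₁ _).slice hs)) 1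
  have hflux_per : ∀ j, ZPeriodic fun y => ∂ₜ φ (s, y) * ∂[j] φ (s, y) := fun j =>
    (zPeriodic_timeDeriv_slice hφ (by simp) hper hs).mul
      (zPeriodic_spaceDeriv_slice hφ (by simp) hper hs j)
  have hgrad : Continuous fun x => ∑ j, ∂[j] φ (s, x) ^ 2 :=
    continuous_finsetSum _ fun j _ => ((hφ₁ _).continuousOn.slice hs).pow 2
  have hdiv : Continuous fun x => ∑ j, pd j (fun y => ∂ₜ φ (s, y) * ∂[j] φ (s, y)) x :=
    continuous_finsetSum _ fun j _ => (hflux j).continuous_pd j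
  have hε : ContDiffOn ℝ ∞ (energyDensity γ φ) posTime := hφ.energyDensity
  have hE := hasDerivAt_integral_cube (contDiffOn_infty.1 hε 1) hs
  refine hE.congr_deriv ?_
  calc _ = ∫ x in cube, (8 / (3 * γ) * s ^ (8 / (3 * γ) - 1) * ∑ j, ∂[j] φ (s, x) ^ 2
        + 2 * s ^ (8 / (3 * γ)) * ∑ j, pd j (fun y => ∂ₜ φ (s, y) * ∂[j] φ (s, y)) x) :=
        setIntegral_congr_fun measurableSet_Icc fun x _ =>
          (hasDerivAt_time_slice (hε.differentiableAt_of_pos (by simp) hs)).unique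
            (hasDerivAt_energyDensity hφ hwave hs x)
    _ = _ := by
        rw [integral_add (Continuous.integrableOn_cube (by fun_prop))
            (Continuous.integrableOn_cube (by fun_prop)),
          integral_const_mul, integral_const_mul,
          integral_finsetSum _ fun j _ => ((hflux j).continuous_pd j).integrableOn_cube]
        simp [integral_cube_pd_eq_zero (hflux _) (hflux_per _)]

theorem energy_monotoneOn (hγ : 0 < γ) (hφ : ContDiffOn ℝ ∞ φ posTime)
    (hwave : ∀ p ∈ posTime, waveOp γ φ p = 0) (hper : ∀ s, 0 < s → ZPeriodic fun x => φ (s, x)) :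
    MonotoneOn (energy γ φ) (Ioi 0) := by
  have hE : ∀ s : ℝ, 0 < s → HasDerivAt (energy γ φ) _ s :=
    fun s hs => hasDerivAt_energy hφ hwave hper hs
  refine monotoneOn_of_deriv_nonneg (convex_Ioi 0)
    (fun s hs => (hE s hs).continuousAt.continuousWithinAt)
    (fun s hs => (hE s (interior_subset hs)).differentiableAt.differentiableWithinAt)
    fun s hs => ?_
  rw [interior_Ioi] at hs
  rw [(hE s hs).deriv]
  exact mul_nonneg (mul_nonneg (by positivity) (Real.rpow_nonneg hs.le _))
    (setIntegral_nonneg measurableSet_Icc fun x _ => by positivity)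

theorem sqrt_integral_timeDeriv_sq_le (hγ : 0 < γ) (hφ : ContDiffOn ℝ ∞ φ posTime)
    (hwave : ∀ p ∈ posTime, waveOp γ φ p = 0) (hper : ∀ s, 0 < s → ZPeriodic fun x => φ (s, x))
    {t₀ : ℝ} (hs : 0 < s) (hst : s ≤ t₀) :
    √(∫ x in cube, ∂ₜ φ (s, x) ^ 2) ≤ s ^ (-(2 / γ)) * √(energy γ φ t₀) := by
  have hcont : Continuous fun x => ∂ₜ φ (s, x) ^ 2 :=
    ((hφ.dirDeriv isOpen_posTime _).continuousOn.slice hs).pow 2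
  have hε : ContDiffOn ℝ ∞ (energyDensity γ φ) posTime := hφ.energyDensity
  have hle : s ^ (4 / γ) * ∫ x in cube, ∂ₜ φ (s, x) ^ 2 ≤ energy γ φ t₀ := by
    calc s ^ (4 / γ) * ∫ x in cube, ∂ₜ φ (s, x) ^ 2
        = ∫ x in cube, s ^ (4 / γ) * ∂ₜ φ (s, x) ^ 2 := (integral_const_mul _ _).symm
      _ ≤ energy γ φ s :=
        setIntegral_mono (continuous_const.mul hcont).integrableOn_cube
          (hε.continuousOn.slice hs).integrableOn_cube fun x =>
            le_add_of_nonneg_right (mul_nonneg (Real.rpow_nonneg hs.le _) (by positivity))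
      _ ≤ energy γ φ t₀ := energy_monotoneOn hγ hφ hwave hper hs (hs.trans_le hst) hst
  have hsqrt : √(s ^ (4 / γ)) = s ^ (2 / γ) := by
    rw [Real.sqrt_eq_rpow, ← Real.rpow_mul hs.le]
    ring_nf
  have h := Real.sqrt_le_sqrt hle
  rw [Real.sqrt_mul (Real.rpow_nonneg hs.le _), hsqrt] at h
  rw [Real.rpow_neg hs.le, inv_mul_eq_div, le_div_iff₀ (Real.rpow_pos_of_pos hs _)]
  linarith

end Energy

section Estimate

variable {γ : ℝ} {φ : ℝ × ℝ³ → ℝ}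

theorem sqrt_integral_sq_le (hγ : 0 < γ) (hγ₂ : γ ≠ 2) (hφ : ContDiffOn ℝ ∞ φ posTime)
    (hwave : ∀ p ∈ posTime, waveOp γ φ p = 0) (hper : ∀ s, 0 < s → ZPeriodic fun x => φ (s, x))
    {t t₀ : ℝ} (ht : 0 < t) (htt₀ : t ≤ t₀) :
    √(∫ x in cube, φ (t, x) ^ 2) ≤ √(∫ x in cube, φ (t₀, x) ^ 2)
      + (t₀ ^ (1 - 2 / γ) - t ^ (1 - 2 / γ)) / (1 - 2 / γ) * √(energy γ φ t₀) := by
  have hpos : ∀ s ∈ Icc t t₀, 0 < s := fun s hs => ht.trans_le hs.1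
  have hexp : 1 - 2 / γ ≠ 0 := fun h => hγ₂ (by field_simp at h; linarith)
  have hB : ∀ s ∈ Icc t t₀, HasDerivAt (fun s => s ^ (1 - 2 / γ) / (1 - 2 / γ) * √(energy γ φ t₀))
      (s ^ (-(2 / γ)) * √(energy γ φ t₀)) s := fun s hs => by
    refine (((Real.hasDerivAt_rpow_const (Or.inl (hpos s hs).ne')).div_const _).mul_const _)
      |>.congr_deriv ?_
    field_simp
    ring_nf
  have hKb : ∀ s ∈ Icc t t₀, -(∫ x in cube, 2 * φ (s, x) * ∂ₜ φ (s, x))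
      ≤ 2 * √(∫ x in cube, φ (s, x) ^ 2) * (s ^ (-(2 / γ)) * √(energy γ φ t₀)) := fun s hs => by
    have hφc := hφ.continuousOn.slice (hpos s hs)
    have hwc := (hφ.dirDeriv isOpen_posTime (1, 0)).continuousOn.slice (hpos s hs)
    calc -(∫ x in cube, 2 * φ (s, x) * ∂ₜ φ (s, x))
        = 2 * ∫ x in cube, -φ (s, x) * ∂ₜ φ (s, x) := by
          rw [← integral_const_mul, ← integral_neg]
          congr 1
          funext x
          ring
      _ ≤ 2 * (√(∫ x in cube, (-φ (s, x)) ^ 2) * √(∫ x in cube, ∂ₜ φ (s, x) ^ 2)) := by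
          gcongr
          exact integral_mul_le_sqrt_mul_sqrt hφc.neg.memLp_two_cube hwc.memLp_two_cube
      _ ≤ _ := by
          simp only [neg_sq, mul_assoc]
          gcongr
          exact sqrt_integral_timeDeriv_sq_le hγ hφ hwave hper (hpos s hs) hs.2
  calc _ ≤ _ := sqrt_le_sqrt_add_sub_of_hasDerivAt htt₀
        (fun s hs => hasDerivAt_integral_sq hφ (hpos s hs)) hB
        (fun s _ => setIntegral_nonneg measurableSet_Icc fun x _ => sq_nonneg _)
        (fun s hs => mul_nonneg (Real.rpow_nonneg (hpos s hs).le _) (Real.sqrt_nonneg _)) hKb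
    _ = _ := by ring

end Estimate

/-- **Lemma 1 (FLRW).** `L²` estimate for the spatial derivatives `∂_{x_i}ψ`. -/
theorem flrw_L2_estimate
    (γ t₀ : ℝ) (hγ1 : 2 / 3 < γ) (hγ2 : γ < 2) (ht₀ : 0 < t₀)
    (ψ : ℝ → (Fin 3 → ℝ) → ℝ)
    (hsmooth : SmoothOnPos ψ)
    (hper : ∀ t : ℝ, 0 < t → ZPeriodic (ψ t))
    (hwave : FLRWwave γ ψ) :
    ∀ i : Fin 3, ∀ t ∈ Set.Ioc (0 : ℝ) t₀,
      Real.sqrt (∫ x in cube, (pd i (ψ t) x) ^ 2)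
        ≤ Real.sqrt (∫ x in cube, (pd i (ψ t₀) x) ^ 2)
          + (t₀ ^ (1 - 2 / γ) - t ^ (1 - 2 / γ)) / (1 - 2 / γ) *
            Real.sqrt (∫ x in cube,
              (t₀ ^ (4 / γ) * (dtd (fun s => pd i (ψ s)) t₀ x) ^ 2
                + t₀ ^ (8 / (3 * γ)) * ∑ j : Fin 3, (pd j (pd i (ψ t₀)) x) ^ 2)) := by
  rintro i t ⟨ht, htt₀⟩
  set Φ : ℝ × ℝ³ → ℝ := fun p => ψ p.1 p.2
  have hΦ : ContDiffOn ℝ ∞ Φ posTime := hsmooth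
  have hφ := hΦ.dirDeriv isOpen_posTime (0, Pi.single i 1)
  have hslice : ∀ s, 0 < s → pd i (ψ s) = fun y => ∂[i] Φ (s, y) := fun s hs =>
    funext fun y => pd_slice_eq (hΦ.differentiableAt_of_pos (by simp) hs) i
  have hφper : ∀ s, 0 < s → ZPeriodic fun x => ∂[i] Φ (s, x) := fun s hs =>
    hslice s hs ▸ (hper s hs).pd i
  have hφwave := waveOp_spaceDeriv_eq_zero hΦ (waveOp_eq_zero_of_flrwWave hsmooth hwave) i
  have henergy : energy γ (∂[i] Φ) t₀ = ∫ x in cube,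
      (t₀ ^ (4 / γ) * (dtd (fun s => pd i (ψ s)) t₀ x) ^ 2
        + t₀ ^ (8 / (3 * γ)) * ∑ j : Fin 3, (pd j (pd i (ψ t₀)) x) ^ 2) := by
    refine setIntegral_congr_fun measurableSet_Icc fun x _ => ?_
    rw [energyDensity, dtd_eq_of_eq_slice (fun s hs => congrFun (hslice s hs) x)
      (hφ.differentiableAt_of_pos (by simp) ht₀) ht₀, hslice t₀ ht₀]
    simp only [pd_slice_eq (hφ.differentiableAt_of_pos (by simp) ht₀)]
  rw [← henergy, hslice t ht, hslice t₀ ht₀]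
  exact sqrt_integral_sq_le (by linarith) hγ2.ne hφ hφwave hφper ht htt₀
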